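/- arXiv:1812.05291 — 3 statements merged into one kernel-verified Lean document; each statement's English description precedes it below -/
import Mathlib

section
/- Let μ be a singular cardinal with cf(μ) = κ < μ and let λ be a regular cardinal with μ < λ ≤ 2^μ. Suppose that 𝒮 is a nice system for μ (with data (μ_i : i < κ), (λ_i : i < κ), filters 𝒟_i, quasi orders W_i and functions g_i as in the definition), and assume that: (ℵ) 𝒟 is a uniform ultrafilter over κ generated by at most λ many sets; (ℶ) f̄ = (f_α : α < λ) is a sullam in (∏_{i<κ} W_i, 𝒟); and (ℷ) there is a family {𝒜_α : α < λ} ⊆ ∏_{i<κ} 𝒟_i, 𝒜_α = (A_{αi} : i < κ), which is cofinal in (∏_{i<κ} 𝒟_i, ⊇), i.e. for every (B_i : i < κ) ∈ ∏_{i<κ} 𝒟_i there is α < λ with A_{αi} ⊆ B_i for every i < κ. Then there exists a uniform ultrafilter 𝒰 over μ such that Ch(𝒰) ≤ λ. -/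
/-!
The ultrafilter `𝒰` is generated, modulo sets of size `< μ`, by the at most `λ` sets
`⋃_{i ∈ b} (g_i(f_α(i)) ∩ A_{γ i})` with `b` in the base of `𝒟` and `α, γ < λ`. Each has size `μ`
because `𝒟` is uniform and the `g_i(w) ∩ A` are `𝒟_i`-positive. Since `cf μ = κ`, pieces
indexed by fewer than `κ` coordinates cover fewer than `μ` points, so it suffices to compare
generators coordinatewise on a set in `𝒟`, which every base element of `𝒟` contains up to
fewer than `κ` coordinates. There, directedness comes from `f̄` being `𝒟`-increasing, `g_i`
being `⊆_{𝒟_i}`-decreasing and the cofinality of the `𝒜_γ`, and every set is decided by the density clause of the sullam applied to the decidability of the `g_i`.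
-/

open Cardinal Set

noncomputable section

namespace Stmt0

/-- The rank-initial segment of `o.toType` consisting of the points of rank `< c.ord`;
it plays the role of the cardinal `c` as a subset of the underlying set of `o`. -/
def seg (o : Ordinal) (c : Cardinal) : Set o.ToType :=
  {x | ((Ordinal.ToType.mk (o := o)).symm x).1 < c.ord}

/-- A (uniform) filter over the field `X`, of uniformity `θ`: a collection of subsets
of `X` containing `X`, closed under intersections and supersets (inside `X`), all of
whose members have cardinality `θ`, and containing the complement (in `X`) of every
subset of `X` of cardinality `< θ`. -/
def IsNiceFilter {α : Type} (X : Set α) (θ : Cardinal) (F : Set (Set α)) : Prop :=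
  (∀ A ∈ F, A ⊆ X) ∧ X ∈ F ∧
  (∀ A ∈ F, ∀ B ∈ F, A ∩ B ∈ F) ∧
  (∀ A ∈ F, ∀ B, A ⊆ B → B ⊆ X → B ∈ F) ∧
  (∀ A ∈ F, #A = θ) ∧
  (∀ u : Set α, u ⊆ X → #u < θ → X \ u ∈ F)

/-- `A ⊆_F B`: `A ∖ B` belongs to the ideal dual to the filter `F` over the field `X`. -/
def subFilter {α : Type} (X : Set α) (F : Set (Set α)) (A B : Set α) : Prop :=
  X \ (A \ B) ∈ F

/-- The `F`-positive subsets of the field `X`: those subsets of `X` not in the dual ideal. -/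
def posSets {α : Type} (X : Set α) (F : Set (Set α)) : Set (Set α) :=
  {A | A ⊆ X ∧ X \ A ∉ F}

/-- A nice system for a singular cardinal `μ` of cofinality `κ` (Definition 1.3 of the
paper): increasing sequences of cardinals `μ_i` with supremum `μ` and of regular
cardinals `λ_i` with `μ_i ≤ λ_i < μ_{i+1}` (equivalently, `λ_i < μ_j` for `i < j`),
uniform filters `𝒟_i` over `λ_i`, quasi orders `(W_i, R_i)`, and maps
`g_i : W_i → 𝒟_i⁺` which are `⊆_{𝒟_i}`-decreasing and have the decidability property. -/
structure NiceSystem (mu κ : Cardinal) where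
  muSeq : κ.ord.ToType → Cardinal
  lamSeq : κ.ord.ToType → Cardinal
  D : κ.ord.ToType → Set (Set mu.ord.ToType)
  W : κ.ord.ToType → Type
  R : ∀ i, W i → W i → Prop
  g : ∀ i, W i → Set mu.ord.ToType
  muSeq_mono : StrictMono muSeq
  mu_sup : mu = ⨆ i, muSeq i
  lamSeq_mono : StrictMono lamSeq
  lamSeq_reg : ∀ i, (lamSeq i).IsRegular
  muSeq_le_lamSeq : ∀ i, muSeq i ≤ lamSeq i
  lamSeq_lt_next : ∀ i j, i < j → lamSeq i < muSeq j
  D_filter : ∀ i, IsNiceFilter (seg mu.ord (lamSeq i)) (lamSeq i) (D i)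
  R_refl : ∀ i w, R i w w
  R_trans : ∀ i a b c, R i a b → R i b c → R i a c
  g_pos : ∀ i w, g i w ∈ posSets (seg mu.ord (lamSeq i)) (D i)
  g_dec : ∀ i s t, R i s t →
    subFilter (seg mu.ord (lamSeq i)) (D i) (g i t) (g i s)
  g_decide : ∀ i (s : W i) (A : Set mu.ord.ToType), A ⊆ seg mu.ord (lamSeq i) →
    ∃ t, R i s t ∧
      (subFilter (seg mu.ord (lamSeq i)) (D i) (g i t) A ∨
       subFilter (seg mu.ord (lamSeq i)) (D i) (g i t) (seg mu.ord (lamSeq i) \ A))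

/-- `f̄ = (f_α : α < λ)` is a sullam in `(∏_{i<κ} W_i, 𝒟)`: it is `𝒟`-increasing, and for
every choice of dense subsets `V_i ⊆ W_i` some `f_α` lies in `V_i` for `𝒟`-almost all `i`. -/
def IsSullam {mu κ : Cardinal} (lam : Cardinal) (S : NiceSystem mu κ)
    (𝒟 : Ultrafilter κ.ord.ToType) (f : lam.ord.ToType → ∀ i, S.W i) : Prop :=
  (∀ a b : lam.ord.ToType, a < b → {i | S.R i (f a i) (f b i)} ∈ 𝒟) ∧
  (∀ V : ∀ i, Set (S.W i), (∀ i, ∀ x : S.W i, ∃ y ∈ V i, S.R i x y) →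
    ∃ a : lam.ord.ToType, {i | f a i ∈ V i} ∈ 𝒟)

theorem exists_gt_mem_of_le_mk {c : Cardinal} (hc : ℵ₀ ≤ c) {b : Set c.ord.ToType}
    (hb : c ≤ #b) (x : c.ord.ToType) : ∃ y ∈ b, x < y := by
  have := Cardinal.noMaxOrder hc
  obtain ⟨z, hxz⟩ := exists_gt x
  by_contra! h
  have hsmall : #(Iio z) < c := by simpa using Cardinal.mk_Iio_lt z
  exact (hb.trans (mk_le_mk_of_subset fun y hy => (h y hy).trans_lt hxz)).not_gt hsmall

theorem mk_union_lt {α : Type*} {μ : Cardinal} (hμ : ℵ₀ ≤ μ) {s t : Set α} (hs : #s < μ)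
    (ht : #t < μ) : #↥(s ∪ t) < μ :=
  (mk_union_le s t).trans_lt (add_lt_of_lt hμ hs ht)

theorem le_mk_of_mk_sdiff_lt {α : Type*} {μ : Cardinal} (hμ : ℵ₀ ≤ μ) {X s : Set α}
    (hX : μ ≤ #X) (hs : #↥(X \ s) < μ) : μ ≤ #s := by
  by_contra! h
  refine hX.not_gt ((mk_le_mk_of_subset fun x hx => ?_).trans_lt (mk_union_lt hμ hs h))
  by_cases xs : x ∈ s <;> simp_all

theorem exists_ultrafilter_mem_iff_almost_superset {α ι : Type*} {μ : Cardinal}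
    (hμ : ℵ₀ ≤ μ) (X : ι → Set α) (hX : ∀ j, μ ≤ #(X j))
    (hdir : ∀ j₁ j₂, ∃ j, #↥(X j \ (X j₁ ∩ X j₂)) < μ)
    (hdec : ∀ A : Set α, ∃ j, #↥(X j \ A) < μ ∨ #↥(X j \ Aᶜ) < μ) :
    ∃ U : Ultrafilter α, ∀ s, s ∈ U ↔ ∃ j, #↥(X j \ s) < μ := by
  let F : Filter α :=
    { sets := {s | ∃ j, #↥(X j \ s) < μ}
      univ_sets := ⟨(hdec univ).choose, by simpa using aleph0_pos.trans_le hμ⟩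
      sets_of_superset := fun ⟨j, hj⟩ hst =>
        ⟨j, (mk_le_mk_of_subset (sdiff_subset_sdiff_right hst)).trans_lt hj⟩
      inter_sets := by
        rintro s t ⟨j₁, hs⟩ ⟨j₂, ht⟩
        obtain ⟨j, hj⟩ := hdir j₁ j₂
        refine ⟨j, (mk_le_mk_of_subset ?_).trans_lt
          (mk_union_lt hμ hj (mk_union_lt hμ hs ht))⟩
        intro x
        simp only [mem_sdiff, mem_inter_iff, mem_union]
        tauto }
  have hF : ⊥ ∉ F.sets := by
    rintro ⟨j, hj⟩
    exact (hX j).not_gt (by simpa using hj)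
  refine ⟨Ultrafilter.ofComplNotMemIff F fun s => ⟨fun hs => ?_, fun hs hsc => hF ?_⟩,
    fun s => Iff.rfl⟩
  · obtain ⟨j, hj | hj⟩ := hdec s
    exacts [⟨j, hj⟩, absurd ⟨j, hj⟩ hs]
  · simpa using F.inter_sets hs hsc

theorem inter_sdiff_sdiff_subset {α : Type*} (X A B : Set α) : A ∩ (X \ (A \ B)) ⊆ B :=
  fun _ ⟨hA, _, hAB⟩ => by_contra fun hB => hAB ⟨hA, hB⟩

namespace IsNiceFilter

variable {α : Type} {X : Set α} {θ : Cardinal} {F : Set (Set α)}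

theorem mk_eq (hF : IsNiceFilter X θ F) : #X = θ :=
  hF.2.2.2.2.1 X hF.2.1

theorem inter_mem (hF : IsNiceFilter X θ F) {A B : Set α} (hA : A ∈ F) (hB : B ∈ F) :
    A ∩ B ∈ F :=
  hF.2.2.1 A hA B hB

theorem le_mk_of_mem_posSets (hF : IsNiceFilter X θ F) {A : Set α} (hA : A ∈ posSets X F) :
    θ ≤ #A :=
  not_lt.1 fun h => hA.2 (hF.2.2.2.2.2 A hA.1 h)

theorem inter_mem_posSets (hF : IsNiceFilter X θ F) {A B : Set α} (hA : A ∈ posSets X F)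
    (hB : B ∈ F) : A ∩ B ∈ posSets X F := by
  refine ⟨inter_subset_left.trans hA.1, fun h => hA.2 ?_⟩
  refine hF.2.2.2.1 _ (hF.inter_mem h hB) _ (fun x ⟨⟨hx, hxAB⟩, hxB⟩ => ?_) sdiff_subset
  exact ⟨hx, fun hxA => hxAB ⟨hxA, hxB⟩⟩

theorem subFilter_mono (hF : IsNiceFilter X θ F) {C A A' : Set α} (h : subFilter X F C A)
    (hAA' : A ⊆ A') : subFilter X F C A' :=
  hF.2.2.2.1 _ h _ (sdiff_subset_sdiff_right (sdiff_subset_sdiff_right hAA')) sdiff_subset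

end IsNiceFilter

namespace NiceSystem

variable {mu κ : Cardinal.{0}}

theorem aleph0_le_of_cof_eq (S : NiceSystem mu κ) (hcof : mu.ord.cof = κ) (hsing : κ < mu) :
    ℵ₀ ≤ κ := by
  have hκ : κ ≠ 0 := by
    rintro rfl
    exact hsing.ne' (ord_eq_zero.1 (Ordinal.cof_eq_zero.1 hcof))
  obtain ⟨i⟩ : Nonempty κ.ord.ToType :=
    Ordinal.nonempty_toType_iff.2 fun h => hκ (ord_eq_zero.1 h)
  have hmu : ℵ₀ ≤ mu := calc
    ℵ₀ ≤ S.lamSeq i := (S.lamSeq_reg i).aleph0_le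
    _ = #(seg mu.ord (S.lamSeq i)) := (S.D_filter i).mk_eq.symm
    _ ≤ mu := (mk_set_le _).trans_eq (mk_ord_toType mu)
  exact hcof ▸ (Cardinal.isRegular_cof (isSuccLimit_ord hmu)).aleph0_le

variable (S : NiceSystem mu κ)

theorem lamSeq_lt (hκ : ℵ₀ ≤ κ) (i : κ.ord.ToType) : S.lamSeq i < mu := by
  have := Cardinal.noMaxOrder hκ
  obtain ⟨j, hij⟩ := exists_gt i
  exact (S.lamSeq_lt_next i j hij).trans_le
    ((le_ciSup bddAbove_of_small j).trans_eq S.mu_sup.symm)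

theorem mk_biUnion_seg_lt (hcof : mu.ord.cof = κ) (hsing : κ < mu) {s : Set κ.ord.ToType}
    (hs : #s < κ) : #↥(⋃ i ∈ s, seg mu.ord (S.lamSeq i)) < mu := by
  have hκ := S.aleph0_le_of_cof_eq hcof hsing
  refine (mk_biUnion_le _ _).trans_lt (mul_lt_of_lt (hκ.trans hsing.le) (hs.trans hsing) ?_)
  refine iSup_lt_of_lt_cof_ord (hcof ▸ hs) fun i => ?_
  rw [(S.D_filter i).mk_eq]
  exact S.lamSeq_lt hκ i

def genSet (w : ∀ i, S.W i) (A : κ.ord.ToType → Set mu.ord.ToType) (b : Set κ.ord.ToType) :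
    Set mu.ord.ToType :=
  ⋃ i ∈ b, S.g i (w i) ∩ A i

theorem le_mk_genSet (hκ : ℵ₀ ≤ κ) (w : ∀ i, S.W i) {A : κ.ord.ToType → Set mu.ord.ToType}
    (hA : ∀ i, A i ∈ S.D i) {b : Set κ.ord.ToType} (hb : κ ≤ #b) : mu ≤ #(S.genSet w A b) := by
  refine S.mu_sup.trans_le (ciSup_le' fun j => ?_)
  obtain ⟨i, hib, hji⟩ := exists_gt_mem_of_le_mk hκ hb j
  calc S.muSeq j ≤ S.lamSeq i := (S.muSeq_le_lamSeq j).trans (S.lamSeq_mono hji).le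
    _ ≤ #↥(S.g i (w i) ∩ A i) := (S.D_filter i).le_mk_of_mem_posSets
      ((S.D_filter i).inter_mem_posSets (S.g_pos i _) (hA i))
    _ ≤ #(S.genSet w A b) :=
      mk_le_mk_of_subset (subset_biUnion_of_mem (u := fun i => S.g i (w i) ∩ A i) hib)

theorem mk_genSet_sdiff_lt (hcof : mu.ord.cof = κ) (hsing : κ < mu) {w : ∀ i, S.W i}
    {A : κ.ord.ToType → Set mu.ord.ToType} {b G : Set κ.ord.ToType} {Y : Set mu.ord.ToType}
    (hbG : #↥(b \ G) < κ) (hG : ∀ i ∈ G, S.g i (w i) ∩ A i ⊆ Y) :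
    #↥(S.genSet w A b \ Y) < mu := by
  refine (mk_le_mk_of_subset ?_).trans_lt (S.mk_biUnion_seg_lt hcof hsing hbG)
  rintro x ⟨hx, hxY⟩
  obtain ⟨i, hib, hxi⟩ := mem_iUnion₂.1 hx
  exact mem_biUnion ⟨hib, fun hiG => hxY (hG i hiG hxi)⟩ ((S.g_pos i (w i)).1 hxi.1)

theorem exists_rel_subFilter_or_compl (i : κ.ord.ToType) (x : S.W i) (A : Set mu.ord.ToType) :
    ∃ y ∈ {t | subFilter (seg mu.ord (S.lamSeq i)) (S.D i) (S.g i t) A ∨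
      subFilter (seg mu.ord (S.lamSeq i)) (S.D i) (S.g i t) Aᶜ}, S.R i x y := by
  obtain ⟨y, hxy, h | h⟩ := S.g_decide i x (A ∩ seg mu.ord (S.lamSeq i)) inter_subset_right
  · exact ⟨y, .inl ((S.D_filter i).subFilter_mono h inter_subset_left), hxy⟩
  · exact ⟨y, .inr ((S.D_filter i).subFilter_mono h fun z hz hzA => hz.2 ⟨hzA, hz.1⟩), hxy⟩

variable {γ : Type*} {𝒜 : γ → κ.ord.ToType → Set mu.ord.ToType}

theorem exists_forall_mem_subset_of_cofinal
    (h𝒜cof : ∀ C : κ.ord.ToType → Set mu.ord.ToType, (∀ i, C i ∈ S.D i) →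
      ∃ c, ∀ i, 𝒜 c i ⊆ C i)
    {G : Set κ.ord.ToType} {C : κ.ord.ToType → Set mu.ord.ToType} (hC : ∀ i ∈ G, C i ∈ S.D i) :
    ∃ c, ∀ i ∈ G, 𝒜 c i ⊆ C i := by
  classical
  obtain ⟨c, hc⟩ := h𝒜cof (fun i => if i ∈ G then C i else seg mu.ord (S.lamSeq i)) fun i => by
    split_ifs with hi
    exacts [hC i hi, (S.D_filter i).2.1]
  exact ⟨c, fun i hi => by simpa [hi] using hc i⟩

variable {𝒟 : Ultrafilter κ.ord.ToType} {B : Set (Set κ.ord.ToType)}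

theorem exists_genSet_sdiff_lt_of_subFilter (hcof : mu.ord.cof = κ) (hsing : κ < mu)
    (hBbase : ∀ s ∈ 𝒟, ∃ b ∈ B, #↥(b \ s) < κ)
    (h𝒜cof : ∀ C : κ.ord.ToType → Set mu.ord.ToType, (∀ i, C i ∈ S.D i) →
      ∃ c, ∀ i, 𝒜 c i ⊆ C i)
    {w : ∀ i, S.W i} {Y : Set mu.ord.ToType}
    (hY : {i | subFilter (seg mu.ord (S.lamSeq i)) (S.D i) (S.g i (w i)) Y} ∈ 𝒟) :
    ∃ b ∈ B, ∃ c, #↥(S.genSet w (𝒜 c) b \ Y) < mu := by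
  obtain ⟨c, hc⟩ := S.exists_forall_mem_subset_of_cofinal h𝒜cof (C := fun i =>
    seg mu.ord (S.lamSeq i) \ (S.g i (w i) \ Y)) fun i hi => hi
  obtain ⟨b, hb, hbY⟩ := hBbase _ hY
  refine ⟨b, hb, c, S.mk_genSet_sdiff_lt hcof hsing hbY fun i hi => ?_⟩
  exact (inter_subset_inter_right _ (hc i hi)).trans (inter_sdiff_sdiff_subset _ _ _)

theorem exists_genSet_sdiff_inter_lt (hcof : mu.ord.cof = κ) (hsing : κ < mu)
    (hBbase : ∀ s ∈ 𝒟, ∃ b ∈ B, #↥(b \ s) < κ) (h𝒜 : ∀ c i, 𝒜 c i ∈ S.D i)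
    (h𝒜cof : ∀ C : κ.ord.ToType → Set mu.ord.ToType, (∀ i, C i ∈ S.D i) →
      ∃ c, ∀ i, 𝒜 c i ⊆ C i)
    {w w₁ w₂ : ∀ i, S.W i} (h₁ : {i | S.R i (w₁ i) (w i)} ∈ 𝒟)
    (h₂ : {i | S.R i (w₂ i) (w i)} ∈ 𝒟) {b₁ b₂ : Set κ.ord.ToType} (hb₁ : b₁ ∈ 𝒟)
    (hb₂ : b₂ ∈ 𝒟) (c₁ c₂ : γ) :
    ∃ b ∈ B, ∃ c, #↥(S.genSet w (𝒜 c) b \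
      (S.genSet w₁ (𝒜 c₁) b₁ ∩ S.genSet w₂ (𝒜 c₂) b₂)) < mu := by
  let C i := (seg mu.ord (S.lamSeq i) \ (S.g i (w i) \ S.g i (w₁ i)) ∩ 𝒜 c₁ i) ∩
    (seg mu.ord (S.lamSeq i) \ (S.g i (w i) \ S.g i (w₂ i)) ∩ 𝒜 c₂ i)
  have hC : ∀ i ∈ {i | S.R i (w₁ i) (w i)} ∩ {i | S.R i (w₂ i) (w i)}, C i ∈ S.D i :=
    fun i ⟨hi₁, hi₂⟩ => (S.D_filter i).inter_mem
      ((S.D_filter i).inter_mem (S.g_dec i _ _ hi₁) (h𝒜 c₁ i))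
      ((S.D_filter i).inter_mem (S.g_dec i _ _ hi₂) (h𝒜 c₂ i))
  obtain ⟨c, hc⟩ := S.exists_forall_mem_subset_of_cofinal h𝒜cof hC
  obtain ⟨b, hb, hbG⟩ :=
    hBbase _ (Filter.inter_mem (Filter.inter_mem hb₁ hb₂) (Filter.inter_mem h₁ h₂))
  refine ⟨b, hb, c, S.mk_genSet_sdiff_lt hcof hsing hbG ?_⟩
  rintro i ⟨⟨hib₁, hib₂⟩, hi⟩ x ⟨hx, hxc⟩
  obtain ⟨⟨hx₁, hxc₁⟩, hx₂, hxc₂⟩ := hc i hi hxc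
  exact ⟨mem_biUnion hib₁ ⟨inter_sdiff_sdiff_subset _ _ _ ⟨hx, hx₁⟩, hxc₁⟩,
    mem_biUnion hib₂ ⟨inter_sdiff_sdiff_subset _ _ _ ⟨hx, hx₂⟩, hxc₂⟩⟩

end NiceSystem

namespace IsSullam

variable {mu κ lam : Cardinal.{0}} {S : NiceSystem mu κ} {𝒟 : Ultrafilter κ.ord.ToType}
  {f : lam.ord.ToType → ∀ i, S.W i}

theorem exists_ae_upper_bound (hf : IsSullam lam S 𝒟 f) (hlam : ℵ₀ ≤ lam)
    (a₁ a₂ : lam.ord.ToType) :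
    ∃ a, {i | S.R i (f a₁ i) (f a i)} ∈ 𝒟 ∧ {i | S.R i (f a₂ i) (f a i)} ∈ 𝒟 := by
  have := Cardinal.noMaxOrder hlam
  obtain ⟨a, ha⟩ := exists_gt (max a₁ a₂)
  exact ⟨a, hf.1 _ _ ((le_max_left _ _).trans_lt ha), hf.1 _ _ ((le_max_right _ _).trans_lt ha)⟩

theorem exists_ae_subFilter_or_compl (hf : IsSullam lam S 𝒟 f) (Y : Set mu.ord.ToType) :
    ∃ a, {i | subFilter (seg mu.ord (S.lamSeq i)) (S.D i) (S.g i (f a i)) Y} ∈ 𝒟 ∨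
      {i | subFilter (seg mu.ord (S.lamSeq i)) (S.D i) (S.g i (f a i)) Yᶜ} ∈ 𝒟 := by
  obtain ⟨a, ha⟩ := hf.2 _ fun i x => S.exists_rel_subFilter_or_compl i x Y
  exact ⟨a, Ultrafilter.union_mem_iff.1 ha⟩

end IsSullam

theorem stmt0_general (mu κ lam : Cardinal)
    (hcof : mu.ord.cof = κ) (hsing : κ < mu)
    (hreg : lam.IsRegular)
    (S : NiceSystem mu κ)
    (𝒟 : Ultrafilter κ.ord.ToType)
    (h𝒟unif : ∀ s ∈ 𝒟, #s = κ)
    (h𝒟base : ∃ B : Set (Set κ.ord.ToType), #B ≤ lam ∧ (∀ b ∈ B, b ∈ 𝒟) ∧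
      ∀ s ∈ 𝒟, ∃ b ∈ B, #↥(b \ s) < κ)
    (f : lam.ord.ToType → ∀ i, S.W i)
    (hf : IsSullam lam S 𝒟 f)
    (𝒜 : lam.ord.ToType → κ.ord.ToType → Set mu.ord.ToType)
    (h𝒜 : ∀ a i, 𝒜 a i ∈ S.D i)
    (h𝒜cof : ∀ B : κ.ord.ToType → Set mu.ord.ToType, (∀ i, B i ∈ S.D i) →
      ∃ a : lam.ord.ToType, ∀ i, 𝒜 a i ⊆ B i) :
    ∃ 𝒰 : Ultrafilter mu.ord.ToType,
      (∀ s ∈ 𝒰, #s = mu) ∧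
      ∃ ℬ : Set (Set mu.ord.ToType), #ℬ ≤ lam ∧ (∀ b ∈ ℬ, b ∈ 𝒰) ∧
        ∀ s ∈ 𝒰, ∃ b ∈ ℬ, #↥(b \ s) < mu := by
  obtain ⟨B, hBcard, hB𝒟, hBbase⟩ := h𝒟base
  have hκ := S.aleph0_le_of_cof_eq hcof hsing
  have hmu : ℵ₀ ≤ mu := hκ.trans hsing.le
  let X (j : B × lam.ord.ToType × lam.ord.ToType) := S.genSet (f j.2.1) (𝒜 j.2.2) j.1
  have hX j : mu ≤ #(X j) := S.le_mk_genSet hκ _ (h𝒜 _) (h𝒟unif _ (hB𝒟 _ j.1.2)).ge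
  have hdir : ∀ j₁ j₂, ∃ j, #↥(X j \ (X j₁ ∩ X j₂)) < mu := by
    rintro ⟨⟨b₁, hb₁⟩, a₁, c₁⟩ ⟨⟨b₂, hb₂⟩, a₂, c₂⟩
    obtain ⟨a, h₁, h₂⟩ := hf.exists_ae_upper_bound hreg.aleph0_le a₁ a₂
    obtain ⟨b, hb, c, h⟩ := S.exists_genSet_sdiff_inter_lt hcof hsing hBbase h𝒜 h𝒜cof h₁ h₂
      (hB𝒟 _ hb₁) (hB𝒟 _ hb₂) c₁ c₂
    exact ⟨(⟨b, hb⟩, a, c), h⟩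
  have hdec Y : ∃ j, #↥(X j \ Y) < mu ∨ #↥(X j \ Yᶜ) < mu := by
    obtain ⟨a, h | h⟩ := hf.exists_ae_subFilter_or_compl Y <;>
    obtain ⟨b, hb, c, h⟩ := S.exists_genSet_sdiff_lt_of_subFilter hcof hsing hBbase h𝒜cof h
    exacts [⟨(⟨b, hb⟩, a, c), .inl h⟩, ⟨(⟨b, hb⟩, a, c), .inr h⟩]
  obtain ⟨U, hU⟩ := exists_ultrafilter_mem_iff_almost_superset hmu X hX hdir hdec
  refine ⟨U, fun s hs => ?_, range X, ?_, ?_, fun s hs => ?_⟩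
  · obtain ⟨j, hj⟩ := (hU s).1 hs
    exact ((mk_set_le s).trans_eq (mk_ord_toType mu)).antisymm
      (le_mk_of_mk_sdiff_lt hmu (hX j) hj)
  · refine mk_range_le.trans ?_
    simp only [mk_prod, lift_id, mk_ord_toType, mul_eq_self hreg.aleph0_le]
    exact (mul_le_mul' hBcard le_rfl).trans (mul_eq_self hreg.aleph0_le).le
  · rintro _ ⟨j, rfl⟩
    exact (hU _).2 ⟨j, by simpa using aleph0_pos.trans_le hmu⟩
  · obtain ⟨j, hj⟩ := (hU s).1 hs
    exact ⟨X j, mem_range_self j, hj⟩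

/-- Theorem 1.4 of the paper.  Let `μ` be singular with `cf(μ) = κ < μ`, and let `λ` be
regular with `μ < λ ≤ 2^μ`.  Suppose `𝒮` is a nice system for `μ`, `𝒟` is a uniform
ultrafilter over `κ` generated by at most `λ` sets, `f̄ = (f_α : α < λ)` is a sullam in
`(∏_{i<κ} W_i, 𝒟)`, and there is a family `(𝒜_α : α < λ) ⊆ ∏_{i<κ} 𝒟_i` cofinal in
`(∏_{i<κ} 𝒟_i, ⊇)`.  Then there is a uniform ultrafilter `𝒰` over `μ` with `Ch(𝒰) ≤ λ`,
i.e. `𝒰` has a `⊆*`-base of cardinality at most `λ`. -/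
theorem stmt0 (mu κ lam : Cardinal)
    (hcof : mu.ord.cof = κ) (hsing : κ < mu)
    (hreg : lam.IsRegular) (hmulam : mu < lam) (hlam2 : lam ≤ 2 ^ mu)
    (S : NiceSystem mu κ)
    (𝒟 : Ultrafilter κ.ord.ToType)
    (h𝒟unif : ∀ s ∈ 𝒟, #s = κ)
    (h𝒟base : ∃ B : Set (Set κ.ord.ToType), #B ≤ lam ∧ (∀ b ∈ B, b ∈ 𝒟) ∧
      ∀ s ∈ 𝒟, ∃ b ∈ B, #↥(b \ s) < κ)
    (f : lam.ord.ToType → ∀ i, S.W i)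
    (hf : IsSullam lam S 𝒟 f)
    (𝒜 : lam.ord.ToType → κ.ord.ToType → Set mu.ord.ToType)
    (h𝒜 : ∀ a i, 𝒜 a i ∈ S.D i)
    (h𝒜cof : ∀ B : κ.ord.ToType → Set mu.ord.ToType, (∀ i, B i ∈ S.D i) →
      ∃ a : lam.ord.ToType, ∀ i, 𝒜 a i ⊆ B i) :
    ∃ 𝒰 : Ultrafilter mu.ord.ToType,
      (∀ s ∈ 𝒰, #s = mu) ∧
      ∃ ℬ : Set (Set mu.ord.ToType), #ℬ ≤ lam ∧ (∀ b ∈ ℬ, b ∈ 𝒰) ∧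
        ∀ s ∈ 𝒰, ∃ b ∈ ℬ, #↥(b \ s) < mu :=
  stmt0_general mu κ lam hcof hsing hreg S 𝒟 h𝒟unif h𝒟base f hf 𝒜 h𝒜 h𝒜cof

end Stmt0
end
end

section
/- Let μ be a singular cardinal with cf(μ) = κ < μ and let λ be a cardinal with μ < λ. Suppose that 𝒮 is a nice system for μ (with data (μ_i : i < κ), (λ_i : i < κ), filters 𝒟_i, quasi orders W_i and functions g_i), that 𝒟 is a uniform ultrafilter over κ, and that f̄ = (f_α : α < λ) is a sullam in (∏_{i<κ} W_i, 𝒟). Define 𝒰 = {A ⊆ μ : there exist α < λ and x ∈ 𝒟 such that g_i(f_α(i)) ⊆_{𝒟_i} (A ∩ λ_i) for every i ∈ x}. Then 𝒰 is a uniform ultrafilter over μ, i.e. 𝒰 is a filter on μ, for every A ⊆ μ either A ∈ 𝒰 or μ ∖ A ∈ 𝒰, and every element of 𝒰 has cardinality μ. -/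
open Cardinal Set

noncomputable section

namespace Stmt1

/-- The rank-initial segment of `o.toType` consisting of the points of rank `< c.ord`;
it plays the role of the cardinal `c` as a subset of the underlying set of `o`. -/
def seg (o : Ordinal) (c : Cardinal) : Set o.ToType :=
  {x | ((Ordinal.ToType.mk (o := o)).symm x).1 < c.ord}

/-- A (uniform) filter over the field `X`, of uniformity `θ`: a collection of subsets
of `X` containing `X`, closed under intersections and supersets (inside `X`), all of
whose members have cardinality `θ`, and containing the complement (in `X`) of every
subset of `X` of cardinality `< θ`. -/
def IsNiceFilter {α : Type} (X : Set α) (θ : Cardinal) (F : Set (Set α)) : Prop :=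
  (∀ A ∈ F, A ⊆ X) ∧ X ∈ F ∧
  (∀ A ∈ F, ∀ B ∈ F, A ∩ B ∈ F) ∧
  (∀ A ∈ F, ∀ B, A ⊆ B → B ⊆ X → B ∈ F) ∧
  (∀ A ∈ F, #A = θ) ∧
  (∀ u : Set α, u ⊆ X → #u < θ → X \ u ∈ F)

/-- `A ⊆_F B`: `A ∖ B` belongs to the ideal dual to the filter `F` over the field `X`. -/
def subFilter {α : Type} (X : Set α) (F : Set (Set α)) (A B : Set α) : Prop :=
  X \ (A \ B) ∈ F

/-- The `F`-positive subsets of the field `X`: those subsets of `X` not in the dual ideal. -/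
def posSets {α : Type} (X : Set α) (F : Set (Set α)) : Set (Set α) :=
  {A | A ⊆ X ∧ X \ A ∉ F}

/-- A nice system for a singular cardinal `μ` of cofinality `κ` (Definition 1.3 of the
paper): increasing sequences of cardinals `μ_i` with supremum `μ` and of regular
cardinals `λ_i` with `μ_i ≤ λ_i < μ_{i+1}` (equivalently, `λ_i < μ_j` for `i < j`),
uniform filters `𝒟_i` over `λ_i`, quasi orders `(W_i, R_i)`, and maps
`g_i : W_i → 𝒟_i⁺` which are `⊆_{𝒟_i}`-decreasing and have the decidability property. -/
structure NiceSystem (mu κ : Cardinal) where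
  muSeq : κ.ord.ToType → Cardinal
  lamSeq : κ.ord.ToType → Cardinal
  D : κ.ord.ToType → Set (Set mu.ord.ToType)
  W : κ.ord.ToType → Type
  R : ∀ i, W i → W i → Prop
  g : ∀ i, W i → Set mu.ord.ToType
  muSeq_mono : StrictMono muSeq
  mu_sup : mu = ⨆ i, muSeq i
  lamSeq_mono : StrictMono lamSeq
  lamSeq_reg : ∀ i, (lamSeq i).IsRegular
  muSeq_le_lamSeq : ∀ i, muSeq i ≤ lamSeq i
  lamSeq_lt_next : ∀ i j, i < j → lamSeq i < muSeq j
  D_filter : ∀ i, IsNiceFilter (seg mu.ord (lamSeq i)) (lamSeq i) (D i)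
  R_refl : ∀ i w, R i w w
  R_trans : ∀ i a b c, R i a b → R i b c → R i a c
  g_pos : ∀ i w, g i w ∈ posSets (seg mu.ord (lamSeq i)) (D i)
  g_dec : ∀ i s t, R i s t →
    subFilter (seg mu.ord (lamSeq i)) (D i) (g i t) (g i s)
  g_decide : ∀ i (s : W i) (A : Set mu.ord.ToType), A ⊆ seg mu.ord (lamSeq i) →
    ∃ t, R i s t ∧
      (subFilter (seg mu.ord (lamSeq i)) (D i) (g i t) A ∨
       subFilter (seg mu.ord (lamSeq i)) (D i) (g i t) (seg mu.ord (lamSeq i) \ A))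

/-- `f̄ = (f_α : α < λ)` is a sullam in `(∏_{i<κ} W_i, 𝒟)`: it is `𝒟`-increasing, and for
every choice of dense subsets `V_i ⊆ W_i` some `f_α` lies in `V_i` for `𝒟`-almost all `i`. -/
def IsSullam {mu κ : Cardinal} (lam : Cardinal) (S : NiceSystem mu κ)
    (𝒟 : Ultrafilter κ.ord.ToType) (f : lam.ord.ToType → ∀ i, S.W i) : Prop :=
  (∀ a b : lam.ord.ToType, a < b → {i | S.R i (f a i) (f b i)} ∈ 𝒟) ∧
  (∀ V : ∀ i, Set (S.W i), (∀ i, ∀ x : S.W i, ∃ y ∈ V i, S.R i x y) →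
    ∃ a : lam.ord.ToType, {i | f a i ∈ V i} ∈ 𝒟)

/-- The family `𝒰` of subsets of `μ` defined from a nice system, an ultrafilter `𝒟`
over `κ` and a sullam `f̄`:  `A ∈ 𝒰` iff there are `α < λ` and `x ∈ 𝒟` such that
`g_i(f_α(i)) ⊆_{𝒟_i} A ∩ λ_i` for every `i ∈ x`. -/
def UF {mu κ : Cardinal} (lam : Cardinal) (S : NiceSystem mu κ)
    (𝒟 : Ultrafilter κ.ord.ToType) (f : lam.ord.ToType → ∀ i, S.W i) :
    Set (Set mu.ord.ToType) :=
  {A | ∃ a : lam.ord.ToType, ∃ x ∈ 𝒟, ∀ i ∈ x,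
    subFilter (seg mu.ord (S.lamSeq i)) (S.D i) (S.g i (f a i))
      (A ∩ seg mu.ord (S.lamSeq i))}

section NiceFilter

variable {α : Type} {X : Set α} {θ : Cardinal} {F : Set (Set α)}

lemma subFilter_of_subset_right (hF : IsNiceFilter X θ F) {A B C : Set α}
    (hAB : subFilter X F A B) (hBC : B ⊆ C) : subFilter X F A C :=
  hF.2.2.2.1 _ hAB _ (sdiff_subset_sdiff_right (sdiff_subset_sdiff_right hBC)) sdiff_subset

lemma subFilter_trans (hF : IsNiceFilter X θ F) {A B C : Set α}
    (hAB : subFilter X F A B) (hBC : subFilter X F B C) : subFilter X F A C := by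
  refine hF.2.2.2.1 _ (hF.2.2.1 _ hAB _ hBC) _ ?_ sdiff_subset
  intro z
  simp only [mem_inter_iff, mem_sdiff]
  tauto

lemma subFilter_inter (hF : IsNiceFilter X θ F) {A B C : Set α}
    (hAB : subFilter X F A B) (hAC : subFilter X F A C) : subFilter X F A (B ∩ C) := by
  refine hF.2.2.2.1 _ (hF.2.2.1 _ hAB _ hAC) _ ?_ sdiff_subset
  intro z
  simp only [mem_inter_iff, mem_sdiff]
  tauto

/-- If `A ∩ B` had size `< θ`, its complement would lie in `F`, and with `A ⊆_F B` this
puts `X ∖ A` in `F`. -/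
lemma le_mk_inter_of_subFilter (hF : IsNiceFilter X θ F) {A B : Set α}
    (hA : A ∈ posSets X F) (hAB : subFilter X F A B) : θ ≤ #(A ∩ B : Set α) := by
  by_contra! hsmall
  have hco : X \ (A ∩ B) ∈ F := hF.2.2.2.2.2 _ (inter_subset_left.trans hA.1) hsmall
  refine hA.2 (hF.2.2.2.1 _ (hF.2.2.1 _ hco _ hAB) _ ?_ sdiff_subset)
  intro z
  simp only [mem_inter_iff, mem_sdiff]
  tauto

end NiceFilter

lemma exists_mem_le_of_mk_eq {κ : Cardinal} {s : Set κ.ord.ToType} (hs : #s = κ)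
    (j : κ.ord.ToType) : ∃ i ∈ s, j ≤ i := by
  by_contra! hbdd
  have hle : #s ≤ #(Iio j) := mk_le_mk_of_subset hbdd
  rw [hs] at hle
  exact hle.not_gt (by simpa using mk_Iio_lt j)

namespace NiceSystem

variable {mu κ : Cardinal} (S : NiceSystem mu κ)

def Forces (i : κ.ord.ToType) (w : S.W i) (A : Set mu.ord.ToType) : Prop :=
  subFilter (seg mu.ord (S.lamSeq i)) (S.D i) (S.g i w) (A ∩ seg mu.ord (S.lamSeq i))

variable {S} {i : κ.ord.ToType}

lemma Forces.mono {w : S.W i} {A B : Set mu.ord.ToType} (h : S.Forces i w A) (hAB : A ⊆ B) :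
    S.Forces i w B :=
  subFilter_of_subset_right (S.D_filter i) h (inter_subset_inter_left _ hAB)

lemma Forces.of_R {s t : S.W i} {A : Set mu.ord.ToType} (h : S.Forces i s A) (hst : S.R i s t) :
    S.Forces i t A :=
  subFilter_trans (S.D_filter i) (S.g_dec i s t hst) h

lemma Forces.inter {w : S.W i} {A B : Set mu.ord.ToType} (hA : S.Forces i w A)
    (hB : S.Forces i w B) : S.Forces i w (A ∩ B) := by
  rw [Forces, inter_inter_distrib_right]
  exact subFilter_inter (S.D_filter i) hA hB

lemma exists_R_forces_or_forces_compl (s : S.W i) (A : Set mu.ord.ToType) :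
    ∃ t, S.R i s t ∧ (S.Forces i t A ∨ S.Forces i t Aᶜ) := by
  obtain ⟨t, hst, ht⟩ := S.g_decide i s (A ∩ seg mu.ord (S.lamSeq i)) inter_subset_right
  refine ⟨t, hst, ht.imp id fun h => ?_⟩
  rwa [sdiff_inter_self_eq_sdiff, sdiff_eq_compl_inter] at h

lemma Forces.lamSeq_le_mk {w : S.W i} {A : Set mu.ord.ToType} (h : S.Forces i w A) :
    S.lamSeq i ≤ #A :=
  (le_mk_inter_of_subFilter (S.D_filter i) (S.g_pos i w) h).trans
    (mk_le_mk_of_subset fun _ hz => hz.2.1)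

end NiceSystem

namespace UF

open NiceSystem

variable {mu κ lam : Cardinal} {S : NiceSystem mu κ} {𝒟 : Ultrafilter κ.ord.ToType}
  {f : lam.ord.ToType → ∀ i, S.W i}

lemma mem_iff {A : Set mu.ord.ToType} :
    A ∈ UF lam S 𝒟 f ↔ ∃ a, ∀ᶠ i in (𝒟 : Filter κ.ord.ToType), S.Forces i (f a i) A := by
  simp only [UF, Filter.eventually_iff_exists_mem, Ultrafilter.mem_coe, mem_ofPred_eq, Forces]

lemma exists_upper_bound (hf : IsSullam lam S 𝒟 f) (a b : lam.ord.ToType) :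
    ∃ c, ∀ᶠ i in (𝒟 : Filter κ.ord.ToType), S.R i (f a i) (f c i) ∧ S.R i (f b i) (f c i) := by
  rcases le_total a b with hab | hba
  · refine ⟨b, Filter.Eventually.and ?_ (.of_forall fun i => S.R_refl i _)⟩
    rcases hab.lt_or_eq with hab | rfl
    exacts [hf.1 a b hab, .of_forall fun i => S.R_refl i _]
  · refine ⟨a, Filter.Eventually.and (.of_forall fun i => S.R_refl i _) ?_⟩
    rcases hba.lt_or_eq with hba | rfl
    exacts [hf.1 b a hba, .of_forall fun i => S.R_refl i _]

lemma inter_mem (hf : IsSullam lam S 𝒟 f) {A B : Set mu.ord.ToType} (hA : A ∈ UF lam S 𝒟 f)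
    (hB : B ∈ UF lam S 𝒟 f) : A ∩ B ∈ UF lam S 𝒟 f := by
  obtain ⟨a, hA⟩ := mem_iff.1 hA
  obtain ⟨b, hB⟩ := mem_iff.1 hB
  obtain ⟨c, hc⟩ := exists_upper_bound hf a b
  exact mem_iff.2 ⟨c, by
    filter_upwards [hA, hB, hc] with i hAi hBi hci
    exact (hAi.of_R hci.1).inter (hBi.of_R hci.2)⟩

lemma mem_of_superset {A B : Set mu.ord.ToType} (hA : A ∈ UF lam S 𝒟 f) (hAB : A ⊆ B) :
    B ∈ UF lam S 𝒟 f := by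
  obtain ⟨a, hA⟩ := mem_iff.1 hA
  exact mem_iff.2 ⟨a, hA.mono fun i hi => hi.mono hAB⟩

/-- The coordinates deciding `A` form dense sets, so the sullam meets them `𝒟`-almost
everywhere, and `𝒟` being an ultrafilter picks one side. -/
lemma mem_or_compl_mem (hf : IsSullam lam S 𝒟 f) (A : Set mu.ord.ToType) :
    A ∈ UF lam S 𝒟 f ∨ Aᶜ ∈ UF lam S 𝒟 f := by
  obtain ⟨a, ha⟩ := hf.2 (fun i => {t | S.Forces i t A ∨ S.Forces i t Aᶜ}) fun i s => by
    obtain ⟨t, hst, ht⟩ := exists_R_forces_or_forces_compl s A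
    exact ⟨t, ht, hst⟩
  rcases Ultrafilter.union_mem_iff.1 (show {i | S.Forces i (f a i) A} ∪
      {i | S.Forces i (f a i) Aᶜ} ∈ 𝒟 from ha) with h | h
  exacts [Or.inl (mem_iff.2 ⟨a, h⟩), Or.inr (mem_iff.2 ⟨a, h⟩)]

lemma univ_mem (hf : IsSullam lam S 𝒟 f) : Set.univ ∈ UF lam S 𝒟 f :=
  (mem_or_compl_mem hf Set.univ).elim id fun h => mem_of_superset h (subset_univ _)

/-- Uniformity of `𝒟` makes every member of `𝒟` cofinal in `κ`, so `A ∈ 𝒰` has size at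
least `λ_i ≥ μ_j` for arbitrarily large `i`. -/
lemma mk_eq (h𝒟unif : ∀ s ∈ 𝒟, #s = κ) {A : Set mu.ord.ToType} (hA : A ∈ UF lam S 𝒟 f) :
    #A = mu := by
  obtain ⟨a, x, hx, hxA⟩ := hA
  refine le_antisymm ((mk_set_le A).trans (mk_ord_toType mu).le) ?_
  calc mu = ⨆ j, S.muSeq j := S.mu_sup
    _ ≤ #A := ciSup_le' fun j => by
      obtain ⟨i, hix, hji⟩ := exists_mem_le_of_mk_eq (h𝒟unif x hx) j
      calc S.muSeq j ≤ S.muSeq i := S.muSeq_mono.monotone hji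
        _ ≤ S.lamSeq i := S.muSeq_le_lamSeq i
        _ ≤ #A := Forces.lamSeq_le_mk (hxA i hix)

end UF

theorem stmt1_general (mu κ lam : Cardinal)
    (S : NiceSystem mu κ)
    (𝒟 : Ultrafilter κ.ord.ToType)
    (h𝒟unif : ∀ s ∈ 𝒟, #s = κ)
    (f : lam.ord.ToType → ∀ i, S.W i)
    (hf : IsSullam lam S 𝒟 f) :
    (Set.univ ∈ UF lam S 𝒟 f) ∧
    (∀ A ∈ UF lam S 𝒟 f, ∀ B ∈ UF lam S 𝒟 f, A ∩ B ∈ UF lam S 𝒟 f) ∧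
    (∀ A ∈ UF lam S 𝒟 f, ∀ B : Set mu.ord.ToType, A ⊆ B → B ∈ UF lam S 𝒟 f) ∧
    (∀ A : Set mu.ord.ToType, A ∈ UF lam S 𝒟 f ∨ Aᶜ ∈ UF lam S 𝒟 f) ∧
    (∀ A ∈ UF lam S 𝒟 f, #A = mu) :=
  ⟨UF.univ_mem hf, fun _ hA _ hB => UF.inter_mem hf hA hB,
    fun _ hA _ hAB => UF.mem_of_superset hA hAB, UF.mem_or_compl_mem hf,
    fun _ hA => UF.mk_eq h𝒟unif hA⟩

/-- Let `μ` be singular with `cf(μ) = κ < μ`, and `μ < λ`.  Given a nice system `𝒮` for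
`μ`, a uniform ultrafilter `𝒟` over `κ` and a sullam `f̄ = (f_α : α < λ)` in
`(∏_{i<κ} W_i, 𝒟)`, the family
`𝒰 = {A ⊆ μ : ∃ α < λ, ∃ x ∈ 𝒟, ∀ i ∈ x, g_i(f_α(i)) ⊆_{𝒟_i} A ∩ λ_i}`
is a uniform ultrafilter over `μ`: it is a filter on `μ`, for every `A ⊆ μ` either
`A ∈ 𝒰` or `μ ∖ A ∈ 𝒰`, and every member of `𝒰` has cardinality `μ`. -/
theorem stmt1 (mu κ lam : Cardinal)
    (hcof : mu.ord.cof = κ) (hsing : κ < mu) (hmulam : mu < lam)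
    (S : NiceSystem mu κ)
    (𝒟 : Ultrafilter κ.ord.ToType)
    (h𝒟unif : ∀ s ∈ 𝒟, #s = κ)
    (f : lam.ord.ToType → ∀ i, S.W i)
    (hf : IsSullam lam S 𝒟 f) :
    (Set.univ ∈ UF lam S 𝒟 f) ∧
    (∀ A ∈ UF lam S 𝒟 f, ∀ B ∈ UF lam S 𝒟 f, A ∩ B ∈ UF lam S 𝒟 f) ∧
    (∀ A ∈ UF lam S 𝒟 f, ∀ B : Set mu.ord.ToType, A ⊆ B → B ∈ UF lam S 𝒟 f) ∧
    (∀ A : Set mu.ord.ToType, A ∈ UF lam S 𝒟 f ∨ Aᶜ ∈ UF lam S 𝒟 f) ∧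
    (∀ A ∈ UF lam S 𝒟 f, #A = mu) :=
  stmt1_general mu κ lam S 𝒟 h𝒟unif f hf

end Stmt1
end
end

section
/- Let λ be a singular cardinal of countable cofinality (λ > cf(λ) = ℵ₀) and let 𝒜 ⊆ [λ]^λ be an independent family with |𝒜| ≤ λ. Then there exists a set I ∈ [λ]^λ with I ∉ 𝒜 such that for every B ∈ comb(𝒜) one has |B ∩ I| = |B ∖ I| = λ; in particular 𝒜 ∪ {I} is independent, so 𝒜 is not maximal. -/
open Cardinal Set

namespace Stmt3

variable {α : Type}

/-- `[λ]^λ`: the subsets of the underlying set of full cardinality. -/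
def bigs (α : Type) : Set (Set α) := {A : Set α | #A = #α}

/-- `comb 𝒜`: all finite boolean combinations `⋂Γ ∖ ⋃Δ` with `Γ, Δ` disjoint
finite subfamilies of `𝒜` (with `⋂∅ = univ`). -/
def comb (𝒜 : Set (Set α)) : Set (Set α) :=
  {B | ∃ Γ Δ : Finset (Set α), ↑Γ ⊆ 𝒜 ∧ ↑Δ ⊆ 𝒜 ∧ Disjoint Γ Δ ∧
    B = (⋂ s ∈ Γ, s) \ (⋃ s ∈ Δ, s)}

/-- `𝒜 ⊆ [λ]^λ` is independent iff every finite boolean combination has full size. -/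
def Indep (𝒜 : Set (Set α)) : Prop :=
  𝒜 ⊆ bigs α ∧ ∀ B ∈ comb 𝒜, #B = #α

/-- A maximal independent family: independent, and no proper superfamily is independent. -/
def MaxIndep (𝒜 : Set (Set α)) : Prop :=
  Indep 𝒜 ∧ ∀ ℬ : Set (Set α), 𝒜 ⊂ ℬ → ¬ Indep ℬ

/-! A family of at most `λ` sets, each of size `λ`, is split by a single set: by transfinite
recursion along `λ` (fewer than `λ` points are used at every stage) choose pairwise distinct
points `g (B, x, b) ∈ B` for `B` in the family, `x < λ` and `b : Bool`, and let `I` collect the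
points with `b = true`. Since `|comb 𝒜| ≤ λ`, such an `I` splits every `B ∈ comb 𝒜`, and every
boolean combination over `𝒜 ∪ {I}` is `B`, `B ∩ I` or `B \ I` for some `B ∈ comb 𝒜`. -/

universe u

section Transversal

variable {ι β : Type u}

theorem exists_injective_forall_mem_of_ord_eq_type [LinearOrder ι] [WellFoundedLT ι]
    (hι : (#ι).ord = Ordinal.type (α := ι) (· < ·)) (f : ι → Set β)
    (hf : ∀ i, #ι ≤ #(f i)) : ∃ g : ι → β, Function.Injective g ∧ ∀ i, g i ∈ f i := by
  have exists_fresh : ∀ i (prev : ∀ j, j < i → β), ∃ x ∈ f i, ∀ j h, prev j h ≠ x := by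
    intro i prev
    have hsmall : #(range fun j : Iio i => prev j j.2) < #(f i) :=
      mk_range_le.trans_lt ((mk_Iio_lt i hι).trans_le (hf i))
    obtain ⟨x, hx, hxprev⟩ : (f i \ range fun j : Iio i => prev j j.2).Nonempty :=
      sdiff_nonempty.2 fun hsub => (mk_le_mk_of_subset hsub).not_gt hsmall
    exact ⟨x, hx, fun j hj hjx => hxprev ⟨⟨j, hj⟩, hjx⟩⟩
  let g := wellFounded_lt.fix fun i prev => (exists_fresh i prev).choose
  have hg : ∀ i, g i ∈ f i ∧ ∀ j < i, g j ≠ g i := fun i => by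
    rw [show g i = _ from wellFounded_lt.fix_eq _ i]
    exact (exists_fresh i _).choose_spec
  refine ⟨g, fun i j hij => ?_, fun i => (hg i).1⟩
  by_contra hne
  rcases lt_or_gt_of_ne hne with h | h
  · exact (hg j).2 i h hij
  · exact (hg i).2 j h hij.symm

theorem exists_injective_forall_mem (f : ι → Set β) (hf : ∀ i, #ι ≤ #(f i)) :
    ∃ g : ι → β, Function.Injective g ∧ ∀ i, g i ∈ f i := by
  have hT : #(#ι).ord.ToType = #ι := by simp
  obtain ⟨e⟩ := Cardinal.eq.1 hT
  obtain ⟨g, hg, hmem⟩ := exists_injective_forall_mem_of_ord_eq_type (by simp) (f ∘ e)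
    fun t => hT.trans_le (hf (e t))
  exact ⟨g ∘ e.symm, hg.comp e.symm.injective, fun i => by simpa using hmem (e.symm i)⟩

theorem exists_split_of_mk_le (hβ : ℵ₀ ≤ #β) (ℱ : Set (Set β)) (hℱ : #ℱ ≤ #β)
    (hbig : ∀ B ∈ ℱ, #B = #β) :
    ∃ I : Set β, ∀ B ∈ ℱ, #↥(B ∩ I) = #β ∧ #↥(B \ I) = #β := by
  have hidx : #(ℱ × β × Bool) ≤ #β := by
    calc #(ℱ × β × Bool) = #ℱ * (#β * 2) := by simp [mk_prod]
      _ ≤ #β * (#β * #β) := by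
          gcongr; exact ofNat_lt_aleph0.le.trans hβ
      _ = #β := by rw [mul_eq_self hβ, mul_eq_self hβ]
  obtain ⟨g, hg, hmem⟩ := exists_injective_forall_mem (fun p : ℱ × β × Bool => (p.1 : Set β))
    fun p => hidx.trans_eq (hbig _ p.1.2).symm
  refine ⟨range fun p : ℱ × β => g (p.1, p.2, true), fun B hB => ⟨?_, ?_⟩⟩
  · refine le_antisymm (mk_set_le _) (mk_le_of_injective
      (f := fun x => ⟨g (⟨B, hB⟩, x, true), hmem (⟨B, hB⟩, x, true), ⟨(⟨B, hB⟩, x), rfl⟩⟩)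
      fun x y hxy => ?_)
    simpa using hg (Subtype.ext_iff.1 hxy)
  · refine le_antisymm (mk_set_le _) (mk_le_of_injective
      (f := fun x => ⟨g (⟨B, hB⟩, x, false), hmem (⟨B, hB⟩, x, false), ?_⟩) fun x y hxy => ?_)
    · rintro ⟨p, hp⟩
      simpa using hg hp
    · simpa using hg (Subtype.ext_iff.1 hxy)

end Transversal

theorem univ_mem_comb (𝒜 : Set (Set α)) : Set.univ ∈ comb 𝒜 :=
  ⟨∅, ∅, by simp, by simp, by simp, by simp⟩

theorem mem_comb_of_mem {𝒜 : Set (Set α)} {A : Set α} (hA : A ∈ 𝒜) : A ∈ comb 𝒜 :=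
  ⟨{A}, ∅, by simp [hA], by simp, by simp, by simp⟩

theorem mk_comb_le (𝒜 : Set (Set α)) : #(comb 𝒜) ≤ max ℵ₀ #𝒜 := by
  classical
  let G : Finset 𝒜 × Finset 𝒜 → Set α := fun p => (⋂ s ∈ p.1, (s : Set α)) \ ⋃ s ∈ p.2, s
  have hcomb : comb 𝒜 ⊆ range G := by
    rintro _ ⟨Γ, Δ, hΓ, hΔ, -, rfl⟩
    refine ⟨(Γ.subtype (· ∈ 𝒜), Δ.subtype (· ∈ 𝒜)), ?_⟩
    ext x
    simp only [G, mem_sdiff, mem_iInter, mem_iUnion, Finset.mem_subtype, Subtype.forall,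
      Subtype.exists, exists_prop]
    exact and_congr ⟨fun h s hs => h s (hΓ hs) hs, fun h s _ hs => h s hs⟩
      (not_congr ⟨fun ⟨s, _, hs, hx⟩ => ⟨s, hs, hx⟩, fun ⟨s, hs, hx⟩ => ⟨s, hΔ hs, hs, hx⟩⟩)
  have hfin : #(Finset 𝒜) ≤ max ℵ₀ #𝒜 :=
    (mk_le_of_surjective List.toFinset_surjective).trans (mk_list_le_max _)
  calc #(comb 𝒜) ≤ #(Finset 𝒜 × Finset 𝒜) := (mk_le_mk_of_subset hcomb).trans mk_range_le
    _ ≤ max ℵ₀ #𝒜 * max ℵ₀ #𝒜 := by rw [mk_prod, lift_id]; exact mul_le_mul' hfin hfin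
    _ = max ℵ₀ #𝒜 := mul_eq_self (le_max_left _ _)

theorem exists_mem_comb_of_mem_comb_union_singleton {𝒜 : Set (Set α)} {I C : Set α}
    (hC : C ∈ comb (𝒜 ∪ {I})) : ∃ B ∈ comb 𝒜, C = B ∨ C = B ∩ I ∨ C = B \ I := by
  classical
  obtain ⟨Γ, Δ, hΓ, hΔ, hΓΔ, rfl⟩ := hC
  have erase_subset (Θ : Finset (Set α)) (hΘ : ↑Θ ⊆ 𝒜 ∪ {I}) : ↑(Θ.erase I) ⊆ 𝒜 := by
    rwa [Finset.coe_erase, sdiff_subset_iff, union_comm]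
  refine ⟨_, ⟨Γ.erase I, Δ.erase I, erase_subset Γ hΓ, erase_subset Δ hΔ,
    hΓΔ.mono (Finset.erase_subset _ _) (Finset.erase_subset _ _), rfl⟩, ?_⟩
  by_cases hIΓ : I ∈ Γ
  · have hIΔ : I ∉ Δ := Finset.disjoint_left.1 hΓΔ hIΓ
    refine Or.inr (Or.inl ?_)
    conv_lhs => rw [← Finset.insert_erase hIΓ]
    rw [Finset.erase_eq_of_notMem hIΔ, Finset.set_biInter_insert, inter_sdiff_assoc, inter_comm]
  by_cases hIΔ : I ∈ Δ
  · refine Or.inr (Or.inr ?_)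
    conv_lhs => rw [← Finset.insert_erase hIΔ]
    rw [Finset.erase_eq_of_notMem hIΓ, Finset.set_biUnion_insert, sdiff_sdiff, union_comm]
  · exact Or.inl (by rw [Finset.erase_eq_of_notMem hIΓ, Finset.erase_eq_of_notMem hIΔ])

theorem Indep.union_singleton {𝒜 : Set (Set α)} (h𝒜 : Indep 𝒜) {I : Set α}
    (hI : ∀ B ∈ comb 𝒜, #↥(B ∩ I) = #α ∧ #↥(B \ I) = #α) : Indep (𝒜 ∪ {I}) := by
  refine ⟨union_subset h𝒜.1 (singleton_subset_iff.2 ?_), fun C hC => ?_⟩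
  · simpa [bigs] using (hI Set.univ (univ_mem_comb 𝒜)).1
  obtain ⟨B, hB, hCB | hCB | hCB⟩ := exists_mem_comb_of_mem_comb_union_singleton hC <;> rw [hCB]
  exacts [h𝒜.2 B hB, (hI B hB).1, (hI B hB).2]

theorem Indep.exists_split {𝒜 : Set (Set α)} (h𝒜 : Indep 𝒜) (hα : ℵ₀ ≤ #α) (hcard : #𝒜 ≤ #α) :
    ∃ I : Set α, ∀ B ∈ comb 𝒜, #↥(B ∩ I) = #α ∧ #↥(B \ I) = #α :=
  exists_split_of_mk_le hα (comb 𝒜) ((mk_comb_le 𝒜).trans (max_le hα hcard)) h𝒜.2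

theorem stmt3_general (lam : Cardinal) (hsing : ℵ₀ < lam)
    (𝒜 : Set (Set lam.ord.ToType)) (hind : Indep 𝒜) (hcard : #𝒜 ≤ lam) :
    ∃ I : Set lam.ord.ToType,
      #I = #lam.ord.ToType ∧ I ∉ 𝒜 ∧
      (∀ B ∈ comb 𝒜, #↥(B ∩ I) = #lam.ord.ToType ∧ #↥(B \ I) = #lam.ord.ToType) ∧
      Indep (𝒜 ∪ {I}) ∧ ¬ MaxIndep 𝒜 := by
  have hα : #lam.ord.ToType = lam := by simp
  obtain ⟨I, hI⟩ := hind.exists_split (hsing.le.trans_eq hα.symm) (hcard.trans_eq hα.symm)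
  have hIA : I ∉ 𝒜 := fun hmem => by
    have hempty := (hI I (mem_comb_of_mem hmem)).2
    rw [sdiff_self, mk_eq_zero, hα] at hempty
    exact (aleph0_pos.trans hsing).ne hempty
  have hindI := hind.union_singleton hI
  refine ⟨I, hindI.1 (mem_union_right _ rfl), hIA, hI, hindI, fun hmax => ?_⟩
  exact hmax.2 _ (by rw [union_singleton]; exact ssubset_insert hIA) hindI

/-- Let `λ` be singular of countable cofinality and `𝒜 ⊆ [λ]^λ` independent with
`|𝒜| ≤ λ`.  Then there is `I ∈ [λ]^λ`, `I ∉ 𝒜`, splitting every `B ∈ comb 𝒜`;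
in particular `𝒜 ∪ {I}` is independent and `𝒜` is not maximal. -/
theorem stmt3 (lam : Cardinal) (hcof : lam.ord.cof = ℵ₀) (hsing : ℵ₀ < lam)
    (𝒜 : Set (Set lam.ord.ToType)) (hind : Indep 𝒜) (hcard : #𝒜 ≤ lam) :
    ∃ I : Set lam.ord.ToType,
      #I = #lam.ord.ToType ∧ I ∉ 𝒜 ∧
      (∀ B ∈ comb 𝒜, #↥(B ∩ I) = #lam.ord.ToType ∧ #↥(B \ I) = #lam.ord.ToType) ∧
      Indep (𝒜 ∪ {I}) ∧ ¬ MaxIndep 𝒜 :=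
  stmt3_general lam hsing 𝒜 hind hcard

end Stmt3
end
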